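/- arXiv:1506.07090 — 2 statements merged into one kernel-verified Lean document; each statement's English description precedes it below -/
import Mathlib

section
/- For s ≥ 1, a ∈ ℕ, λ ≥ 0, and monomials p(λ) = λᵐ, q(λ) = λⁿ with m + n ≥ a, the inequality Σ_{k=0}^{a} (C(a,k))^s D^{k,s}p(λ) · D^{a−k,s}q(λ) ≤ D^{a,s}(p(λ)q(λ)) holds, where D^{a,s}(λⁿ) = (n!/(n−a)!)^s λ^{n−a} and C(a,k) is the binomial coefficient. -/
/-!
Write `D^{k,s} λ^m · D^{a-k,s} λ^n` as `(m)_k^s (n)_{a-k}^s λ^{m+n-a}`, with `(n)_k` the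
descending factorial; every term of the left-hand side then has the common factor
`λ^{m+n-a}`, and what remains is `∑ₖ (C(a,k) (m)_k (n)_{a-k})^s`. Superadditivity of
`x ↦ x^s` for `s ≥ 1` bounds this by `(∑ₖ C(a,k) (m)_k (n)_{a-k})^s`, and by Vandermonde's
identity the inner sum is `(m+n)_a`.
-/

/-- `D^{a,s}` applied to the monomial `λ^n`, namely `(n!/(n-a)!)^s λ^(n-a)`
(which is `0` when `n < a` since then the descending factorial vanishes). -/
noncomputable def Dmon (s : ℝ) (a n : ℕ) (lam : ℝ) : ℝ :=
  ((n.descFactorial a : ℝ)) ^ s * lam ^ (n - a)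

theorem Real.sum_rpow_le_rpow_sum {ι : Type*} {p : ℝ} (hp : 1 ≤ p) (t : Finset ι)
    {f : ι → ℝ} (hf : ∀ i ∈ t, 0 ≤ f i) : ∑ i ∈ t, f i ^ p ≤ (∑ i ∈ t, f i) ^ p := by
  induction t using Finset.cons_induction with
  | empty => simp [Real.zero_rpow (by linarith : p ≠ 0)]
  | cons i t hi ih =>
    rw [Finset.sum_cons, Finset.sum_cons]
    have hf' : ∀ j ∈ t, 0 ≤ f j := fun j hj => hf j (Finset.mem_cons_of_mem hj)
    calc f i ^ p + ∑ j ∈ t, f j ^ p ≤ f i ^ p + (∑ j ∈ t, f j) ^ p := by gcongr; exact ih hf'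
      _ ≤ (f i + ∑ j ∈ t, f j) ^ p :=
        Real.add_rpow_le_rpow_add (hf i (Finset.mem_cons_self i t)) (Finset.sum_nonneg hf') hp

theorem Nat.add_descFactorial_eq_sum_choose_mul (m n a : ℕ) :
    (m + n).descFactorial a =
      ∑ k ∈ Finset.range (a + 1), a.choose k * m.descFactorial k * n.descFactorial (a - k) := by
  rw [Nat.descFactorial_eq_factorial_mul_choose, Nat.add_choose_eq,
    Finset.Nat.sum_antidiagonal_eq_sum_range_succ_mk, Finset.mul_sum]
  refine Finset.sum_congr rfl fun k hk => ?_
  rw [Nat.descFactorial_eq_factorial_mul_choose m, Nat.descFactorial_eq_factorial_mul_choose n,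
    ← Nat.choose_mul_factorial_mul_factorial (Finset.mem_range_succ_iff.mp hk)]
  ring

theorem choose_rpow_mul_Dmon_mul_Dmon {s : ℝ} (hs : s ≠ 0) {a k : ℕ} (hk : k ≤ a) (m n : ℕ)
    (lam : ℝ) :
    (a.choose k : ℝ) ^ s * Dmon s k m lam * Dmon s (a - k) n lam =
      ((a.choose k * m.descFactorial k * n.descFactorial (a - k) : ℕ) : ℝ) ^ s *
        lam ^ (m + n - a) := by
  unfold Dmon
  by_cases hkmn : k ≤ m ∧ a - k ≤ n
  · have hexp : m + n - a = (m - k) + (n - (a - k)) := by omega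
    push_cast
    rw [Real.mul_rpow (by positivity) (by positivity),
      Real.mul_rpow (by positivity) (by positivity), hexp, pow_add]
    ring
  · -- a factor `(m)_k` or `(n)_{a-k}` vanishes on both sides
    have hzero : m.descFactorial k = 0 ∨ n.descFactorial (a - k) = 0 := by
      simp only [Nat.descFactorial_eq_zero_iff_lt]
      omega
    rcases hzero with h | h <;> simp [h, Real.zero_rpow hs]

theorem Dop_leibniz_upper_general (s : ℝ) (hs : 1 ≤ s) (a m n : ℕ)
    (lam : ℝ) (hlam : 0 ≤ lam) :
    ∑ k ∈ Finset.range (a + 1),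
        ((a.choose k : ℝ)) ^ s * Dmon s k m lam * Dmon s (a - k) n lam
      ≤ Dmon s a (m + n) lam := by
  set c : ℕ → ℕ := fun k => a.choose k * m.descFactorial k * n.descFactorial (a - k)
  calc ∑ k ∈ Finset.range (a + 1), (a.choose k : ℝ) ^ s * Dmon s k m lam * Dmon s (a - k) n lam
      = (∑ k ∈ Finset.range (a + 1), ((c k : ℕ) : ℝ) ^ s) * lam ^ (m + n - a) := by
        rw [Finset.sum_mul]
        exact Finset.sum_congr rfl fun k hk =>
          choose_rpow_mul_Dmon_mul_Dmon (by linarith) (Finset.mem_range_succ_iff.mp hk) m n lam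
    _ ≤ (∑ k ∈ Finset.range (a + 1), ((c k : ℕ) : ℝ)) ^ s * lam ^ (m + n - a) := by
        gcongr
        exact Real.sum_rpow_le_rpow_sum hs _ fun k _ => Nat.cast_nonneg _
    _ = Dmon s a (m + n) lam := by
        rw [Dmon, Nat.add_descFactorial_eq_sum_choose_mul, Nat.cast_sum]

theorem Dop_leibniz_upper (s : ℝ) (hs : 1 ≤ s) (a m n : ℕ) (ha : a ≤ m + n)
    (lam : ℝ) (hlam : 0 ≤ lam) :
    ∑ k ∈ Finset.range (a + 1),
        ((a.choose k : ℝ)) ^ s * Dmon s k m lam * Dmon s (a - k) n lam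
      ≤ Dmon s a (m + n) lam :=
  Dop_leibniz_upper_general s hs a m n lam hlam
end

section
/- For s ≥ 1, a ∈ ℕ, λ ≥ 0, and monomials p(λ) = λᵐ, q(λ) = λⁿ with m + n ≥ a, the inequality (1+a)^{1−s} D^{a,s}(p(λ)q(λ)) ≤ Σ_{k=0}^{a} (C(a,k))^s D^{k,s}p(λ) · D^{a−k,s}q(λ) holds. -/
/-!
Vandermonde's identity for descending factorials, `(m+n)_a = ∑ₖ C(a,k) mₖ n_{a-k}`, expands the
left-hand side. Each term on the right-hand side is the `s`-th power of the corresponding summand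
times `λ^{m+n-a}` (both vanish when `k > m` or `a - k > n`), so the claim is the power-mean
inequality `(∑ₖ xₖ)^s ≤ (a+1)^{s-1} ∑ₖ xₖ^s`.
-/

open Finset

theorem Nat.descFactorial_add_vandermonde (a m n : ℕ) :
    (m + n).descFactorial a
      = ∑ k ∈ range (a + 1), a.choose k * m.descFactorial k * n.descFactorial (a - k) := by
  rw [descFactorial_eq_factorial_mul_choose, add_choose_eq,
    Finset.Nat.sum_antidiagonal_eq_sum_range_succ (fun i j => m.choose i * n.choose j), mul_sum]
  refine sum_congr rfl fun k hk => ?_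
  rw [descFactorial_eq_factorial_mul_choose, descFactorial_eq_factorial_mul_choose,
    ← choose_mul_factorial_mul_factorial (mem_range_succ_iff.mp hk)]
  ring

theorem Real.card_rpow_one_sub_mul_sum_rpow_le {ι : Type*} (t : Finset ι) {f : ι → ℝ} {p : ℝ}
    (hp : 1 ≤ p) (hf : ∀ i ∈ t, 0 ≤ f i) :
    (#t : ℝ) ^ (1 - p) * (∑ i ∈ t, f i) ^ p ≤ ∑ i ∈ t, f i ^ p := by
  rcases t.eq_empty_or_nonempty with rfl | ht
  · simp [Real.zero_rpow (by linarith : p ≠ 0)]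
  have hcard : (0 : ℝ) < #t := by exact_mod_cast ht.card_pos
  calc (#t : ℝ) ^ (1 - p) * (∑ i ∈ t, f i) ^ p
      ≤ (#t : ℝ) ^ (1 - p) * ((#t : ℝ) ^ (p - 1) * ∑ i ∈ t, f i ^ p) := by
        gcongr
        exact Real.rpow_sum_le_const_mul_sum_rpow_of_nonneg t hp hf
    _ = ∑ i ∈ t, f i ^ p := by
        rw [← mul_assoc, ← Real.rpow_add hcard]
        simp

theorem Dmon_mul_Dmon {s : ℝ} (hs : s ≠ 0) (k l m n : ℕ) (lam : ℝ) :
    Dmon s k m lam * Dmon s l n lam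
      = ((m.descFactorial k * n.descFactorial l : ℕ) : ℝ) ^ s * lam ^ (m + n - (k + l)) := by
  by_cases hkm : k ≤ m
  · by_cases hln : l ≤ n
    · rw [Dmon, Dmon, Nat.cast_mul, Real.mul_rpow (Nat.cast_nonneg _) (Nat.cast_nonneg _),
        show m + n - (k + l) = (m - k) + (n - l) by omega, pow_add]
      ring
    · simp [Dmon, Nat.descFactorial_eq_zero_iff_lt.mpr (not_le.mp hln), Real.zero_rpow hs]
  · simp [Dmon, Nat.descFactorial_eq_zero_iff_lt.mpr (not_le.mp hkm), Real.zero_rpow hs]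

theorem Dop_leibniz_lower_general (s : ℝ) (hs : 1 ≤ s) (a m n : ℕ)
    (lam : ℝ) (hlam : 0 ≤ lam) :
    ((1 : ℝ) + a) ^ (1 - s) * Dmon s a (m + n) lam
      ≤ ∑ k ∈ Finset.range (a + 1),
          ((a.choose k : ℝ)) ^ s * Dmon s k m lam * Dmon s (a - k) n lam := by
  have hterm : ∀ k ∈ range (a + 1),
      ((a.choose k : ℝ)) ^ s * Dmon s k m lam * Dmon s (a - k) n lam
        = ((a.choose k * m.descFactorial k * n.descFactorial (a - k) : ℕ) : ℝ) ^ s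
          * lam ^ (m + n - a) := by
    intro k hk
    rw [mul_assoc, Dmon_mul_Dmon (by linarith : s ≠ 0),
      Nat.add_sub_cancel' (mem_range_succ_iff.mp hk), ← mul_assoc,
      ← Real.mul_rpow (by positivity) (by positivity), ← Nat.cast_mul, ← mul_assoc]
  calc ((1 : ℝ) + a) ^ (1 - s) * Dmon s a (m + n) lam
      = (#(range (a + 1)) : ℝ) ^ (1 - s)
          * (∑ k ∈ range (a + 1),
              ((a.choose k * m.descFactorial k * n.descFactorial (a - k) : ℕ) : ℝ)) ^ s
          * lam ^ (m + n - a) := by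
        rw [Dmon, Nat.descFactorial_add_vandermonde, card_range, Nat.cast_sum, Nat.cast_succ,
          add_comm (a : ℝ), mul_assoc]
    _ ≤ (∑ k ∈ range (a + 1),
          ((a.choose k * m.descFactorial k * n.descFactorial (a - k) : ℕ) : ℝ) ^ s)
          * lam ^ (m + n - a) := by
        gcongr
        exact Real.card_rpow_one_sub_mul_sum_rpow_le _ hs fun k _ => by positivity
    _ = _ := by rw [sum_mul]; exact (sum_congr rfl hterm).symm

theorem Dop_leibniz_lower (s : ℝ) (hs : 1 ≤ s) (a m n : ℕ) (ha : a ≤ m + n)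
    (lam : ℝ) (hlam : 0 ≤ lam) :
    ((1 : ℝ) + a) ^ (1 - s) * Dmon s a (m + n) lam
      ≤ ∑ k ∈ Finset.range (a + 1),
          ((a.choose k : ℝ)) ^ s * Dmon s k m lam * Dmon s (a - k) n lam :=
  Dop_leibniz_lower_general s hs a m n lam hlam
end
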